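/- For t ≥ 1, the identity h_t = ∑_{ε ∈ {0,1}^{t-1}} [ q₁^{∑_{s: ε_s = 0} s} / ((q₁-1)(q₁²-1)⋯(q₁^t-1)) ] · s'_ε holds in the ring of symmetric functions over ℚ(q₁), where s'_ε are ribbon skew Schur functions in the plethystically modified power sums p'_t = (q₁^t - 1)p_t and h_t is the usual complete homogeneous symmetric function. -/

import Mathlib

/-!
The series `H = ∑ hₙ xⁿ` and `H' = ∑ h'ₙ xⁿ` have logarithmic derivatives `P = ∑ p_{t+1} xᵗ` and
`P' = ∑ (q₁^{t+1} - 1) p_{t+1} xᵗ`, and the logarithmic derivative of `H(q₁x)` is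
`q₁ P(q₁x) = P + P'`. Since all three series have constant term `1`, uniqueness of solutions of
`F' = QF` gives `H(q₁x) = H(x) H'(x)`, i.e. `∑_{m ≤ n} hₘ h'_{n+1-m} = (q₁^{n+1} - 1) h_{n+1}`.

The identity follows from the case `k = 0` of
`∑_ε q₁^{w(ε)} s'_{ε0ᵏ} = ∏_{j ≤ t} (q₁ʲ - 1) · ∑_{m ≤ t} hₘ h'_{t+k+1-m}` (`w(ε) = ∑_{ε_s = 0} s`),
proved by induction on the length `t` of `ε`: splitting off the last letter of `ε`, the ribbon
rule `s'_{δ10ᵏ} = s'_δ h'_{k+1} - s'_{δ0^{k+1}}` and the convolution identity reduce `t` by one.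
-/

noncomputable section

abbrev K1 : Type := FractionRing (Polynomial ℚ)

noncomputable def q₁ : K1 := algebraMap (Polynomial ℚ) K1 Polynomial.X

abbrev Lam : Type := MvPolynomial ℕ K1

/-- the power sum p_t (t ≥ 1) -/
noncomputable def pp (t : ℕ) : Lam := MvPolynomial.X t

/-- the plethystically modified power sum p'_t = (q₁ᵗ - 1) p_t -/
noncomputable def pp' (t : ℕ) : Lam := MvPolynomial.C (q₁ ^ t - 1) * pp t

open Finset PowerSeries

namespace PowerSeries

variable {R : Type*} [CommRing R]

theorem eq_of_derivative_eq_mul [IsAddTorsionFree R] {Q F G : R⟦X⟧}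
    (hF : d⁄dX R F = Q * F) (hG : d⁄dX R G = Q * G) (h0 : constantCoeff F = constantCoeff G) :
    F = G := by
  ext n
  induction n using Nat.strong_induction_on with
  | _ n ih =>
  cases n with
  | zero => simpa using h0
  | succ n =>
    have e : coeff n (d⁄dX R F) = coeff n (d⁄dX R G) := by
      rw [hF, hG, coeff_mul, coeff_mul]
      exact sum_congr rfl fun p hp => by rw [ih p.2 (Finset.Nat.antidiagonal.snd_lt hp)]
    rwa [coeff_derivative, coeff_derivative, mul_comm, ← Nat.cast_succ, ← nsmul_eq_mul, mul_comm,
      ← nsmul_eq_mul, smul_right_inj n.succ_ne_zero] at e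

theorem derivative_rescale (a : R) (f : R⟦X⟧) :
    d⁄dX R (rescale a f) = a • rescale a (d⁄dX R f) := by
  ext n
  simp only [coeff_derivative, coeff_rescale, coeff_smul, smul_eq_mul, pow_succ]
  ring

theorem sum_range_mul_eq_of_rescale_eq_mul {q : R} {h h' : ℕ → R} (hh'0 : h' 0 = 1)
    (hrescale : rescale q (mk h) = mk h * mk h') (n : ℕ) :
    ∑ m ∈ range (n + 1), h m * h' (n + 1 - m) = (q ^ (n + 1) - 1) * h (n + 1) := by
  have e := congr(coeff (n + 1) $hrescale)
  rw [coeff_rescale, coeff_mk, coeff_mul, Finset.Nat.sum_antidiagonal_eq_sum_range_succ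
    (fun i j => coeff i (mk h) * coeff j (mk h')), sum_range_succ] at e
  simp only [coeff_mk, Nat.sub_self, hh'0] at e
  linear_combination -e

end PowerSeries

theorem Fintype.sum_fun_fin_succ {α M : Type*} [Fintype α] [AddCommMonoid M] (n : ℕ)
    (f : (Fin (n + 1) → α) → M) :
    ∑ ε, f ε = ∑ δ : Fin n → α, ∑ a, f (Fin.snoc δ a) := by
  rw [← Fintype.sum_equiv (Fin.snocEquiv fun _ => α) (fun p => f (Fin.snoc p.2 p.1)) f
    fun _ => rfl, Fintype.sum_prod_type_right]

def zeroPositionSum {n : ℕ} (ε : Fin n → Bool) : ℕ :=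
  ∑ s ∈ univ.filter (fun s => ε s = false), ((s : ℕ) + 1)

theorem zeroPositionSum_snoc {n : ℕ} (δ : Fin n → Bool) (b : Bool) :
    zeroPositionSum (Fin.snoc δ b : Fin (n + 1) → Bool)
      = zeroPositionSum δ + if b = false then n + 1 else 0 := by
  simp [zeroPositionSum, sum_filter, Fin.sum_univ_castSucc]

section Ribbon

variable {R : Type*} [CommRing R] {q : R} {h h' : ℕ → R} {S : List Bool → R}

theorem sum_pow_mul_ribbon_append_replicate (hh0 : h 0 = 1)
    (hS0 : ∀ k, S (List.replicate k false) = h' (k + 1))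
    (hSrule : ∀ ε ε', S ε * S ε' = S (ε ++ [false] ++ ε') + S (ε ++ [true] ++ ε'))
    (hconv : ∀ n, ∑ m ∈ range (n + 1), h m * h' (n + 1 - m) = (q ^ (n + 1) - 1) * h (n + 1))
    (t k : ℕ) :
    ∑ ε : Fin t → Bool, q ^ zeroPositionSum ε * S (List.ofFn ε ++ List.replicate k false)
      = (∏ j ∈ Icc 1 t, (q ^ j - 1)) * ∑ m ∈ range (t + 1), h m * h' (t + k + 1 - m) := by
  induction t generalizing k with
  | zero => simp [zeroPositionSum, hS0, hh0]
  | succ t ih =>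
    have append_false (l : List Bool) :
        l ++ [false] ++ List.replicate k false = l ++ List.replicate (k + 1) false := by
      simp [List.replicate_succ]
    have append_true (l : List Bool) : S (l ++ [true] ++ List.replicate k false)
        = S l * h' (k + 1) - S (l ++ List.replicate (k + 1) false) := by
      rw [← hS0, hSrule, append_false, add_sub_cancel_left]
    have sum_snoc (δ : Fin t → Bool) :
        ∑ b, q ^ zeroPositionSum (Fin.snoc δ b : Fin (t + 1) → Bool)
            * S (List.ofFn (Fin.snoc δ b : Fin (t + 1) → Bool) ++ List.replicate k false)
        = q ^ zeroPositionSum δ * S (List.ofFn δ) * h' (k + 1)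
          + (q ^ (t + 1) - 1)
            * (q ^ zeroPositionSum δ * S (List.ofFn δ ++ List.replicate (k + 1) false)) := by
      simp only [Fintype.sum_bool, zeroPositionSum_snoc, List.ofFn_succ_last, Fin.snoc_last,
        Fin.snoc_castSucc, append_true, append_false, Bool.true_eq_false, ↓reduceIte, pow_add]
      ring
    have ih0 := ih 0
    simp only [List.replicate_zero, List.append_nil, add_zero, hconv] at ih0
    rw [Fintype.sum_fun_fin_succ, sum_congr rfl fun δ _ => sum_snoc δ, sum_add_distrib,
      ← sum_mul, ← mul_sum, ih0, ih, prod_Icc_succ_top (by omega), sum_range_succ _ (t + 1),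
      show t + 1 + k + 1 = t + (k + 1) + 1 by ring, show t + (k + 1) + 1 - (t + 1) = k + 1 by omega]
    ring

theorem sum_pow_mul_ribbon (hh0 : h 0 = 1)
    (hS0 : ∀ k, S (List.replicate k false) = h' (k + 1))
    (hSrule : ∀ ε ε', S ε * S ε' = S (ε ++ [false] ++ ε') + S (ε ++ [true] ++ ε'))
    (hconv : ∀ n, ∑ m ∈ range (n + 1), h m * h' (n + 1 - m) = (q ^ (n + 1) - 1) * h (n + 1))
    (n : ℕ) :
    ∑ ε : Fin n → Bool, q ^ zeroPositionSum ε * S (List.ofFn ε)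
      = (∏ j ∈ Icc 1 (n + 1), (q ^ j - 1)) * h (n + 1) := by
  have e := sum_pow_mul_ribbon_append_replicate hh0 hS0 hSrule hconv n 0
  simp only [List.replicate_zero, List.append_nil, add_zero, hconv] at e
  rw [e, prod_Icc_succ_top (by omega), mul_assoc]

end Ribbon

theorem q₁_pow_sub_one_ne_zero {j : ℕ} (hj : 0 < j) : q₁ ^ j - 1 ≠ 0 := by
  have hX := (map_ne_zero_iff _ (IsFractionRing.injective (Polynomial ℚ) K1)).mpr
    (Polynomial.X_pow_sub_C_ne_zero hj (1 : ℚ))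
  simpa [q₁] using hX

theorem rescale_mk_eq_mul_mk {h h' : ℕ → Lam} (hh0 : h 0 = 1) (hh'0 : h' 0 = 1)
    (hgen : d⁄dX Lam (mk h) = (mk fun t => pp (t + 1)) * mk h)
    (hgen' : d⁄dX Lam (mk h') = (mk fun t => pp' (t + 1)) * mk h') :
    rescale (MvPolynomial.C q₁) (mk h) = mk h * mk h' := by
  have hlog : (MvPolynomial.C q₁ : Lam) • rescale (MvPolynomial.C q₁) (mk fun t => pp (t + 1))
      = (mk fun t => pp (t + 1)) + mk fun t => pp' (t + 1) := by
    refine PowerSeries.ext fun n => ?_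
    simp [pp', coeff_rescale, pow_succ]
    ring
  apply eq_of_derivative_eq_mul (Q := (mk fun t => pp (t + 1)) + mk fun t => pp' (t + 1))
  · rw [derivative_rescale, hgen, map_mul, ← hlog, smul_mul_assoc]
  · rw [Derivation.leibniz, hgen, hgen', smul_eq_mul, smul_eq_mul]
    ring
  · rw [← coeff_zero_eq_constantCoeff_apply, ← coeff_zero_eq_constantCoeff_apply, coeff_rescale]
    simp [hh0, hh'0]

theorem statement19
    (h h' : ℕ → Lam) (hh0 : h 0 = 1) (hh'0 : h' 0 = 1)
    (hgen : PowerSeries.derivativeFun (PowerSeries.mk h) =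
      (PowerSeries.mk fun t => pp (t + 1)) * PowerSeries.mk h)
    (hgen' : PowerSeries.derivativeFun (PowerSeries.mk h') =
      (PowerSeries.mk fun t => pp' (t + 1)) * PowerSeries.mk h')
    (S : List Bool → Lam)
    (hS0 : ∀ t : ℕ, S (List.replicate t false) = h' (t + 1))
    (hSrule : ∀ ε ε' : List Bool,
      S ε * S ε' = S (ε ++ [false] ++ ε') + S (ε ++ [true] ++ ε')) :
    ∀ t : ℕ, 1 ≤ t →
      h t = ∑ ε : Fin (t - 1) → Bool,
        MvPolynomial.C
          ((q₁ ^ (∑ s ∈ Finset.univ.filter (fun s : Fin (t-1) => ε s = false), ((s : ℕ) + 1))) /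
            (∏ j ∈ Finset.Icc 1 t, (q₁ ^ j - 1)))
          * S (List.ofFn ε) := by
  intro t ht
  obtain ⟨n, rfl⟩ : ∃ n, t = n + 1 := ⟨t - 1, by omega⟩
  set D := ∏ j ∈ Icc 1 (n + 1), (q₁ ^ j - 1)
  have hD : D ≠ 0 := prod_ne_zero_iff.mpr fun j hj => q₁_pow_sub_one_ne_zero (mem_Icc.mp hj).1
  have hsum := sum_pow_mul_ribbon hh0 hS0 hSrule
    (sum_range_mul_eq_of_rescale_eq_mul hh'0 (rescale_mk_eq_mul_mk hh0 hh'0 hgen hgen')) n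
  calc h (n + 1) = MvPolynomial.C D⁻¹ * (MvPolynomial.C D * h (n + 1)) := by
        rw [← mul_assoc, ← map_mul, inv_mul_cancel₀ hD, map_one, one_mul]
    _ = ∑ ε : Fin n → Bool, MvPolynomial.C (q₁ ^ zeroPositionSum ε / D) * S (List.ofFn ε) := by
        simp only [D, map_prod, map_sub, map_pow, map_one, ← hsum, mul_sum, div_eq_mul_inv,
          map_mul]
        exact sum_congr rfl fun ε _ => by ring

end
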